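/- Let m, n be positive integers, A ∈ M_{m,n}(ℝ), and let (y_k)_{k≥1} be a sequence of nonzero vectors in ℤ^m such that Y_k = ‖y_k‖ is strictly increasing with Y_k → ∞ and M_k = ‖(^tA) y_k‖_ℤ is strictly decreasing with M_k > 0 for all k. For k ≥ 2 set γ_k = max( (Y_k^{m/n} M_{k-1})^{n/(m+n)}, (Y_{k+1}^{m/n} M_k)^{n/(m+n)} ). Then for any α > 0, if b ∈ [0,1]^m satisfies ‖b·y_k‖_ℤ > α γ_k for all sufficiently large k ≥ 2, then b ∈ Bad_A((α−n)/m); that is, there are only finitely many q ∈ ℤ^n with ‖Aq − b‖_ℤ < ((α−n)/m) ‖q‖^{−n/m}. -/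

import Mathlib

/-!
Transference: if `q ∈ ℤⁿ` and `y ∈ ℤᵐ`, then, with `p` and `r` the integer vectors nearest to
`ᵗA y` and `A q - b`, the integer `q·p - r·y` lies within `n‖q‖‖ᵗA y‖_ℤ + m‖y‖‖A q - b‖_ℤ` of
`b·y`. Put `u_k = (Y_{k+1} / M_k)^{m/(m+n)}`; since `u_k → ∞`, a solution `q` with `‖q‖` larger
than `u_K` satisfies `u_k < ‖q‖ ≤ u_{k+1}` for some `k ≥ K`. At that scale both `‖q‖ M_{k+1}`
and `Y_{k+1} ‖q‖^{-n/m}` are at most `γ_k`, so transference with `y = y_{k+1}` gives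
`‖b·y_{k+1}‖_ℤ ≤ α γ_k`, contrary to the hypothesis. Hence all solutions lie in a ball.
-/

open Filter

/-- Distance from `x ∈ ℝ^k` to the nearest integer vector, in the sup norm. -/
noncomputable def intDist {k : ℕ} (x : Fin k → ℝ) : ℝ :=
  ⨅ p : Fin k → ℤ, ‖x - (fun i => (p i : ℝ))‖

/-- Distance from a real number to the nearest integer. -/
noncomputable def intDistR (t : ℝ) : ℝ := ⨅ p : ℤ, |t - (p : ℝ)|

open Matrix

lemma intDistR_le_abs_sub (t : ℝ) (p : ℤ) : intDistR t ≤ |t - p| :=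
  ciInf_le ⟨0, by rintro x ⟨p, rfl⟩; exact abs_nonneg _⟩ p

lemma intDist_nonneg {k : ℕ} (x : Fin k → ℝ) : 0 ≤ intDist x :=
  le_ciInf fun _ => norm_nonneg _

lemma norm_sub_round_le_intDist {k : ℕ} (x : Fin k → ℝ) :
    ‖x - fun i => (round (x i) : ℝ)‖ ≤ intDist x :=
  le_ciInf fun p => (pi_norm_le_iff_of_nonneg (norm_nonneg _)).2 fun i =>
    (round_le (x i) (p i)).trans (norm_le_pi_norm (x - fun i => (p i : ℝ)) i)

lemma abs_dotProduct_le_card_mul {ι : Type*} [Fintype ι] (v w : ι → ℝ) :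
    |v ⬝ᵥ w| ≤ Fintype.card ι * (‖v‖ * ‖w‖) := by
  calc |v ⬝ᵥ w| ≤ ∑ i, |v i| * |w i| := by
        simpa only [dotProduct, abs_mul] using
          Finset.abs_sum_le_sum_abs (fun i => v i * w i) Finset.univ
    _ ≤ ∑ _i : ι, ‖v‖ * ‖w‖ := by
        gcongr with i
        exacts [norm_le_pi_norm v i, norm_le_pi_norm w i]
    _ = Fintype.card ι * (‖v‖ * ‖w‖) := by simp

lemma dotProduct_sub_sub_eq {ι κ : Type*} [Fintype ι] [Fintype κ] (A : Matrix ι κ ℝ)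
    (b z r : ι → ℝ) (x p : κ → ℝ) :
    b ⬝ᵥ z - (x ⬝ᵥ p - r ⬝ᵥ z) = x ⬝ᵥ (Aᵀ *ᵥ z - p) - (A *ᵥ x - b - r) ⬝ᵥ z := by
  have hexch : (A *ᵥ x) ⬝ᵥ z = x ⬝ᵥ (Aᵀ *ᵥ z) := by
    rw [dotProduct_comm, dotProduct_mulVec, dotProduct_comm, ← mulVec_transpose]
  simp only [dotProduct_sub, sub_dotProduct, hexch]
  ring

lemma intDistR_sum_mul_le {m n : ℕ} (A : Matrix (Fin m) (Fin n) ℝ)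
    (y : Fin m → ℤ) (b : Fin m → ℝ) (q : Fin n → ℤ) :
    intDistR (∑ i, b i * (y i : ℝ)) ≤
      n * ‖(fun j => (q j : ℝ))‖ * intDist (Aᵀ *ᵥ (fun i => (y i : ℝ)))
      + m * ‖(fun i => (y i : ℝ))‖ * intDist (A *ᵥ (fun j => (q j : ℝ)) - b) := by
  set yc : Fin m → ℝ := fun i => (y i : ℝ)
  set qc : Fin n → ℝ := fun j => (q j : ℝ)
  set t := Aᵀ *ᵥ yc
  set d := A *ᵥ qc - b
  set p : Fin n → ℤ := fun j => round (t j)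
  set r : Fin m → ℤ := fun i => round (d i)
  have hcast {k : ℕ} (v w : Fin k → ℤ) :
      ((v ⬝ᵥ w : ℤ) : ℝ) = (fun i => (v i : ℝ)) ⬝ᵥ fun i => (w i : ℝ) :=
    RingHom.map_dotProduct (Int.castRingHom ℝ) v w
  calc intDistR (b ⬝ᵥ yc) ≤ |b ⬝ᵥ yc - ((q ⬝ᵥ p - r ⬝ᵥ y : ℤ) : ℝ)| := intDistR_le_abs_sub _ _
    _ = |qc ⬝ᵥ (t - fun j => (p j : ℝ)) - (d - fun i => (r i : ℝ)) ⬝ᵥ yc| := by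
        rw [Int.cast_sub, hcast, hcast, dotProduct_sub_sub_eq A]
    _ ≤ |qc ⬝ᵥ (t - fun j => (p j : ℝ))| + |(d - fun i => (r i : ℝ)) ⬝ᵥ yc| := abs_sub _ _
    _ ≤ n * (‖qc‖ * ‖t - fun j => (p j : ℝ)‖) + m * (‖d - fun i => (r i : ℝ)‖ * ‖yc‖) := by
        gcongr
        · simpa only [Fintype.card_fin] using
            abs_dotProduct_le_card_mul qc (t - fun j => (p j : ℝ))
        · simpa only [Fintype.card_fin] using
            abs_dotProduct_le_card_mul (d - fun i => (r i : ℝ)) yc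
    _ ≤ n * (‖qc‖ * intDist t) + m * (intDist d * ‖yc‖) := by
        gcongr
        exacts [norm_sub_round_le_intDist t, norm_sub_round_le_intDist d]
    _ = _ := by ring

lemma finite_setOf_norm_intCast_le {ι : Type*} [Fintype ι] (R : ℝ) :
    {q : ι → ℤ | ‖(fun j => (q j : ℝ))‖ ≤ R}.Finite := by
  refine ((isCompact_closedBall (0 : ι → ℤ) R).finite DiscreteTopology.isDiscrete).subset
    fun q hq => mem_closedBall_zero_iff.2 (le_trans ?_ hq)
  refine (pi_norm_le_iff_of_nonneg (norm_nonneg _)).2 fun j => ?_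
  rw [← Int.norm_cast_real]
  exact norm_le_pi_norm (fun j => (q j : ℝ)) j

lemma exists_lt_le_succ {α : Type*} [LinearOrder α] {u : ℕ → α} {a : α} {K N : ℕ}
    (hK : u K < a) (hKN : K ≤ N) (hN : a ≤ u N) : ∃ k ≥ K, u k < a ∧ a ≤ u (k + 1) := by
  by_contra! h
  exact (Nat.le_induction (P := fun k _ => u k < a) hK h N hKN).not_ge hN

lemma tendsto_rpow_div_atTop {Y M : ℕ → ℝ} {a : ℝ} (ha : 0 < a) (hY : Tendsto Y atTop atTop)
    (hM : Antitone M) (hMpos : ∀ k, 0 < M k) :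
    Tendsto (fun k => (Y (k + 1) / M k) ^ a) atTop atTop := by
  have hY' := hY.comp (tendsto_add_atTop_nat 1)
  refine (tendsto_rpow_atTop ha).comp
    (tendsto_atTop_mono' _ ?_ (hY'.atTop_div_const (hMpos 0)))
  filter_upwards [hY'.eventually_ge_atTop 0] with k hk
  exact div_le_div_of_nonneg_left hk (hMpos k) (hM k.zero_le)

section Exponents

variable {s t Y M Q : ℝ}

lemma rpow_div_mul_eq (hs : 0 < s) (ht : 0 < t) (hY : 0 < Y) (hM : 0 < M) :
    (Y / M) ^ (s / (s + t)) * M = (Y ^ (s / t) * M) ^ (t / (s + t)) := by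
  rw [← Real.exp_log (by positivity : 0 < (Y / M) ^ (s / (s + t)) * M),
    ← Real.exp_log (by positivity : 0 < (Y ^ (s / t) * M) ^ (t / (s + t)))]
  congr 1
  rw [Real.log_mul (by positivity) hM.ne', Real.log_rpow (by positivity),
    Real.log_div hY.ne' hM.ne', Real.log_rpow (by positivity),
    Real.log_mul (by positivity) hM.ne', Real.log_rpow hY]
  field_simp
  ring

lemma mul_rpow_div_rpow_neg_eq (hs : 0 < s) (ht : 0 < t) (hY : 0 < Y) (hM : 0 < M) :
    Y * ((Y / M) ^ (s / (s + t))) ^ (-t / s) = (Y ^ (s / t) * M) ^ (t / (s + t)) := by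
  rw [← Real.exp_log (by positivity : 0 < Y * ((Y / M) ^ (s / (s + t))) ^ (-t / s)),
    ← Real.exp_log (by positivity : 0 < (Y ^ (s / t) * M) ^ (t / (s + t)))]
  congr 1
  rw [Real.log_mul hY.ne' (by positivity), Real.log_rpow (by positivity),
    Real.log_rpow (by positivity), Real.log_div hY.ne' hM.ne', Real.log_rpow (by positivity),
    Real.log_mul (by positivity) hM.ne', Real.log_rpow hY]
  field_simp
  ring

lemma mul_le_of_le_rpow_div (hs : 0 < s) (ht : 0 < t) (hY : 0 < Y) (hM : 0 < M)
    (hQ : Q ≤ (Y / M) ^ (s / (s + t))) : Q * M ≤ (Y ^ (s / t) * M) ^ (t / (s + t)) :=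
  rpow_div_mul_eq hs ht hY hM ▸ mul_le_mul_of_nonneg_right hQ hM.le

lemma mul_rpow_neg_le_of_rpow_div_le (hs : 0 < s) (ht : 0 < t) (hY : 0 < Y) (hM : 0 < M)
    (hQ : (Y / M) ^ (s / (s + t)) ≤ Q) :
    Y * Q ^ (-t / s) ≤ (Y ^ (s / t) * M) ^ (t / (s + t)) :=
  mul_rpow_div_rpow_neg_eq hs ht hY hM ▸ mul_le_mul_of_nonneg_left
    (Real.rpow_le_rpow_of_nonpos (by positivity) hQ
      (div_nonpos_of_nonpos_of_nonneg (neg_nonpos.2 ht.le) hs.le)) hY.le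

end Exponents

lemma mul_add_mul_le_of_lt_div_mul {s t α Q M Y D w g : ℝ} (hs : 0 < s) (ht : 0 ≤ t)
    (hY : 0 ≤ Y) (hD : 0 ≤ D) (hw : 0 ≤ w) (hDw : D < (α - t) / s * w)
    (hQM : Q * M ≤ g) (hYw : Y * w ≤ g) : t * Q * M + s * Y * D ≤ α * g := by
  have hαt : 0 ≤ α - t := by
    by_contra! h
    exact (hD.trans_lt hDw).not_ge
      (mul_nonpos_of_nonpos_of_nonneg (div_nonpos_of_nonpos_of_nonneg h.le hs.le) hw)
  calc t * Q * M + s * Y * D ≤ t * g + s * Y * ((α - t) / s * w) := by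
        rw [mul_assoc]
        gcongr
    _ = t * g + (α - t) * (Y * w) := by field_simp
    _ ≤ t * g + (α - t) * g := by gcongr
    _ = α * g := by ring

/-- The sequence is indexed so that `y (k-1)` plays the role of `y_k`; accordingly the
quantity `γ k` below plays the role of `γ_{k+2}`, paired with `y (k+1)`. -/
theorem mem_bad_of_eventually_general (m n : ℕ) (hm : 0 < m) (hn : 0 < n)
    (A : Matrix (Fin m) (Fin n) ℝ)
    (y : ℕ → (Fin m → ℤ))
    (Y M : ℕ → ℝ)
    (hY : ∀ k, Y k = ‖(fun i => (y k i : ℝ))‖)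
    (hM : ∀ k, M k = intDist (A.transpose.mulVec (fun i => (y k i : ℝ))))
    (hYmono : StrictMono Y) (hYtop : Tendsto Y atTop atTop)
    (hMmono : StrictAnti M) (hMpos : ∀ k, 0 < M k)
    (γ : ℕ → ℝ)
    (hγ : ∀ k, γ k =
      max ((Y (k + 1) ^ ((m : ℝ) / n) * M k) ^ ((n : ℝ) / (m + n)))
          ((Y (k + 2) ^ ((m : ℝ) / n) * M (k + 1)) ^ ((n : ℝ) / (m + n))))
    (α : ℝ)
    (b : Fin m → ℝ)
    (hev : ∃ K : ℕ, ∀ k ≥ K, α * γ k < intDistR (∑ i, b i * ((y (k + 1)) i : ℝ))) :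
    {q : Fin n → ℤ |
      intDist (A.mulVec (fun j => (q j : ℝ)) - b) <
        ((α - n) / m) * ‖(fun j => (q j : ℝ))‖ ^ (-(n : ℝ) / m)}.Finite := by
  obtain ⟨K, hK⟩ := hev
  have hmR : (0 : ℝ) < m := Nat.cast_pos.2 hm
  have hnR : (0 : ℝ) < n := Nat.cast_pos.2 hn
  have hYpos (k : ℕ) : 0 < Y (k + 1) := (hY 0 ▸ norm_nonneg _).trans_lt (hYmono k.succ_pos)
  set u : ℕ → ℝ := fun k => (Y (k + 1) / M k) ^ ((m : ℝ) / (m + n))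
  have hu : Tendsto u atTop atTop :=
    tendsto_rpow_div_atTop (by positivity) hYtop hMmono.antitone hMpos
  refine (finite_setOf_norm_intCast_le (u K)).subset fun q hq =>
    Set.mem_ofPred.2 (le_of_not_gt fun hQ => ?_)
  set Q := ‖(fun j => (q j : ℝ))‖
  obtain ⟨N, hN, hKN⟩ := ((hu.eventually_ge_atTop Q).and (eventually_ge_atTop K)).exists
  obtain ⟨k, hk, hlo, hhi⟩ := exists_lt_le_succ hQ hKN hN
  have hQM : Q * M (k + 1) ≤ γ k := (hγ k).symm ▸ le_max_of_le_right
    (mul_le_of_le_rpow_div hmR hnR (hYpos (k + 1)) (hMpos (k + 1)) hhi)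
  have hYQ : Y (k + 1) * Q ^ (-(n : ℝ) / m) ≤ γ k := (hγ k).symm ▸ le_max_of_le_left
    (mul_rpow_neg_le_of_rpow_div_le hmR hnR (hYpos k) (hMpos k) hlo.le)
  have hkey := intDistR_sum_mul_le A (y (k + 1)) b q
  rw [← hY, ← hM] at hkey
  exact (hK k hk).not_ge <| hkey.trans <| mul_add_mul_le_of_lt_div_mul hmR hnR.le
    (hYpos k).le (intDist_nonneg _) (Real.rpow_nonneg (norm_nonneg _) _) hq hQM hYQ

/-- If `‖b·y_k‖_ℤ > α γ_k` for all sufficiently large `k`, then `b ∈ Bad_A((α-n)/m)`,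
i.e. there are only finitely many `q ∈ ℤ^n` with `‖Aq-b‖_ℤ < ((α-n)/m)‖q‖^{-n/m}`.
The sequence is indexed so that `y (k-1)` plays the role of `y_k`; accordingly the
quantity `γ k` below plays the role of `γ_{k+2}`, paired with `y (k+1)`. -/
theorem mem_bad_of_eventually (m n : ℕ) (hm : 0 < m) (hn : 0 < n)
    (A : Matrix (Fin m) (Fin n) ℝ)
    (y : ℕ → (Fin m → ℤ)) (hy : ∀ k, y k ≠ 0)
    (Y M : ℕ → ℝ)
    (hY : ∀ k, Y k = ‖(fun i => (y k i : ℝ))‖)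
    (hM : ∀ k, M k = intDist (A.transpose.mulVec (fun i => (y k i : ℝ))))
    (hYmono : StrictMono Y) (hYtop : Tendsto Y atTop atTop)
    (hMmono : StrictAnti M) (hMpos : ∀ k, 0 < M k)
    (γ : ℕ → ℝ)
    (hγ : ∀ k, γ k =
      max ((Y (k + 1) ^ ((m : ℝ) / n) * M k) ^ ((n : ℝ) / (m + n)))
          ((Y (k + 2) ^ ((m : ℝ) / n) * M (k + 1)) ^ ((n : ℝ) / (m + n))))
    (α : ℝ) (hα : 0 < α)
    (b : Fin m → ℝ) (hb : b ∈ Set.Icc (0 : Fin m → ℝ) 1)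
    (hev : ∃ K : ℕ, ∀ k ≥ K, α * γ k < intDistR (∑ i, b i * ((y (k + 1)) i : ℝ))) :
    {q : Fin n → ℤ |
      intDist (A.mulVec (fun j => (q j : ℝ)) - b) <
        ((α - n) / m) * ‖(fun j => (q j : ℝ))‖ ^ (-(n : ℝ) / m)}.Finite :=
  mem_bad_of_eventually_general m n hm hn A y Y M hY hM hYmono hYtop hMmono hMpos γ hγ α b hev
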